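/- Let α > 0 and λ > 0. The function φ(x) = x·α·(αx)^(λ−1)·e^(−αx) / Γ(λ, αx), where Γ(λ,z) = ∫_z^∞ t^(λ−1)·e^(−t) dt is the upper incomplete gamma function, is strictly increasing on (0,∞). -/

import Mathlib

open MeasureTheory

/-- The upper incomplete gamma function `Γ(λ, z) = ∫_z^∞ t^(λ−1)·e^(−t) dt`. -/
noncomputable def upperIncGamma (l z : ℝ) : ℝ :=
  ∫ t in Set.Ioi z, t ^ (l - 1) * Real.exp (-t)

namespace UIGaux

lemma integrableOn_gamma (l : ℝ) (hl : 0 < l) {y : ℝ} (hy : 0 < y) :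
    IntegrableOn (fun t : ℝ => t ^ (l - 1) * Real.exp (-t)) (Set.Ioi y) := by
  have h : IntegrableOn (fun x : ℝ => Real.exp (-x) * x ^ (l - 1)) (Set.Ioi y) :=
    (Real.GammaIntegral_convergent hl).mono_set (Set.Ioi_subset_Ioi hy.le)
  exact h.congr_fun (fun x _ => mul_comm _ _) measurableSet_Ioi

lemma preimage_Ioi (y : ℝ) : (fun s : ℝ => s + y) ⁻¹' Set.Ioi y = Set.Ioi 0 := by
  ext s; simp

lemma integral_shift (f : ℝ → ℝ) (y : ℝ) :
    ∫ t in Set.Ioi y, f t = ∫ s in Set.Ioi (0:ℝ), f (s + y) := by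
  have emb : MeasurableEmbedding (fun s : ℝ => s + y) :=
    (MeasurableEquiv.addRight y).measurableEmbedding
  have mp := measurePreserving_add_right (volume : Measure ℝ) y
  have h := mp.setIntegral_preimage_emb emb f (Set.Ioi y)
  rw [← h, preimage_Ioi]

lemma integrableOn_shift {f : ℝ → ℝ} {y : ℝ} (hf : IntegrableOn f (Set.Ioi y)) :
    IntegrableOn (fun s => f (s + y)) (Set.Ioi (0:ℝ)) := by
  have emb : MeasurableEmbedding (fun s : ℝ => s + y) :=
    (MeasurableEquiv.addRight y).measurableEmbedding
  have mp := (measurePreserving_add_right (volume : Measure ℝ) y).restrict_preimage_emb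
    emb (Set.Ioi y)
  have h := (mp.integrable_comp_emb emb).mpr hf
  rwa [preimage_Ioi] at h

lemma uig_pos (l : ℝ) (hl : 0 < l) {y : ℝ} (hy : 0 < y) : 0 < upperIncGamma l y := by
  rw [upperIncGamma]
  have hint := integrableOn_gamma l hl hy
  rw [setIntegral_pos_iff_support_of_nonneg_ae ?_ hint]
  · refine lt_of_lt_of_le ?_ (measure_mono (s := Set.Ioi y) fun t ht => ?_)
    · rw [Real.volume_Ioi]; exact ENNReal.zero_lt_top
    · refine ⟨fun h0 => ?_, ht⟩
      have : (0:ℝ) < t ^ (l - 1) * Real.exp (-t) :=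
        mul_pos (Real.rpow_pos_of_pos (hy.trans ht) _) (Real.exp_pos _)
      exact this.ne' h0
  · filter_upwards [ae_restrict_mem measurableSet_Ioi] with t ht
    exact mul_nonneg (Real.rpow_nonneg (hy.trans ht).le _) (Real.exp_pos _).le

lemma uig_eq (l y : ℝ) :
    upperIncGamma l y = ∫ s in Set.Ioi (0:ℝ), (s + y) ^ (l - 1) * Real.exp (-(s + y)) :=
  integral_shift _ y

lemma key_pointwise (l : ℝ) (hl : 0 < l) {a b s : ℝ} (ha : 0 < a) (hab : a < b)
    (hs : 0 < s) :
    a ^ l * ((s + b) ^ (l - 1) * Real.exp (-s)) <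
      b ^ l * ((s + a) ^ (l - 1) * Real.exp (-s)) := by
  have hb : 0 < b := ha.trans hab
  have hbs : 0 < s + b := by linarith
  have has : 0 < s + a := by linarith
  have hexp : 0 < Real.exp (-s) := Real.exp_pos _
  have main : a ^ l * (s + b) ^ (l - 1) < b ^ l * (s + a) ^ (l - 1) := by
    rcases le_or_gt 1 l with h1 | h1
    · have hXY : a * (s + b) < b * (s + a) := by nlinarith
      have hmono : (a * (s + b)) ^ (l - 1) ≤ (b * (s + a)) ^ (l - 1) :=
        Real.rpow_le_rpow (by positivity) hXY.le (by linarith)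
      have hA : a ^ l = a * a ^ (l - 1) := by
        rw [← Real.rpow_one_add' ha.le (by intro h; simp at h; linarith)]
        ring_nf
      have hB : b ^ l = b * b ^ (l - 1) := by
        rw [← Real.rpow_one_add' hb.le (by intro h; simp at h; linarith)]
        ring_nf
      rw [hA, hB, mul_assoc, mul_assoc, ← Real.mul_rpow ha.le hbs.le,
        ← Real.mul_rpow hb.le has.le]
      calc a * (a * (s + b)) ^ (l - 1) < b * (a * (s + b)) ^ (l - 1) := by
            exact mul_lt_mul_of_pos_right hab (Real.rpow_pos_of_pos (by positivity) _)
        _ ≤ b * (b * (s + a)) ^ (l - 1) := mul_le_mul_of_nonneg_left hmono hb.le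
    · have h2 : (s + b) ^ (l - 1) < (s + a) ^ (l - 1) :=
        Real.rpow_lt_rpow_of_neg has (by linarith) (by linarith)
      have h3 : a ^ l < b ^ l := Real.rpow_lt_rpow ha.le hab hl
      exact mul_lt_mul'' h3 h2 (Real.rpow_nonneg ha.le _) (Real.rpow_nonneg hbs.le _)
  calc a ^ l * ((s + b) ^ (l - 1) * Real.exp (-s))
      = (a ^ l * (s + b) ^ (l - 1)) * Real.exp (-s) := by ring
    _ < (b ^ l * (s + a) ^ (l - 1)) * Real.exp (-s) :=
        mul_lt_mul_of_pos_right main hexp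
    _ = b ^ l * ((s + a) ^ (l - 1) * Real.exp (-s)) := by ring

lemma integrable_shifted (l : ℝ) (hl : 0 < l) {y : ℝ} (hy : 0 < y) :
    IntegrableOn (fun s : ℝ => (s + y) ^ (l - 1) * Real.exp (-s)) (Set.Ioi (0:ℝ)) := by
  have h := integrableOn_shift (integrableOn_gamma l hl hy)
  have h2 : IntegrableOn (fun s : ℝ => Real.exp y * ((s + y) ^ (l - 1) * Real.exp (-(s + y))))
      (Set.Ioi (0:ℝ)) := h.const_mul (Real.exp y)
  refine h2.congr_fun (fun s _ => ?_) measurableSet_Ioi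
  beta_reduce
  rw [show Real.exp y * ((s + y) ^ (l - 1) * Real.exp (-(s + y)))
      = (s + y) ^ (l - 1) * (Real.exp y * Real.exp (-(s + y))) by ring,
    ← Real.exp_add]
  ring_nf

lemma core (l : ℝ) (hl : 0 < l) {a b : ℝ} (ha : 0 < a) (hab : a < b) :
    a ^ l * Real.exp (-a) / upperIncGamma l a <
      b ^ l * Real.exp (-b) / upperIncGamma l b := by
  have hb : 0 < b := ha.trans hab
  have hGa := uig_pos l hl ha
  have hGb := uig_pos l hl hb
  rw [div_lt_div_iff₀ hGa hGb]
  have hia : IntegrableOn (fun s : ℝ => b ^ l * ((s + a) ^ (l - 1) * Real.exp (-s)))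
      (Set.Ioi (0:ℝ)) := (integrable_shifted l hl ha).const_mul _
  have hib : IntegrableOn (fun s : ℝ => a ^ l * ((s + b) ^ (l - 1) * Real.exp (-s)))
      (Set.Ioi (0:ℝ)) := (integrable_shifted l hl hb).const_mul _
  have hkey : (∫ s in Set.Ioi (0:ℝ), a ^ l * ((s + b) ^ (l - 1) * Real.exp (-s))) <
      ∫ s in Set.Ioi (0:ℝ), b ^ l * ((s + a) ^ (l - 1) * Real.exp (-s)) := by
    have hpos : 0 < ∫ s in Set.Ioi (0:ℝ),
        (b ^ l * ((s + a) ^ (l - 1) * Real.exp (-s))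
          - a ^ l * ((s + b) ^ (l - 1) * Real.exp (-s))) := by
      have hsub : IntegrableOn (fun s : ℝ => b ^ l * ((s + a) ^ (l - 1) * Real.exp (-s))
          - a ^ l * ((s + b) ^ (l - 1) * Real.exp (-s))) (Set.Ioi (0:ℝ)) := hia.sub hib
      rw [setIntegral_pos_iff_support_of_nonneg_ae ?_ hsub]
      · refine lt_of_lt_of_le ?_ (measure_mono (s := Set.Ioi (0:ℝ)) fun s hs => ?_)
        · rw [Real.volume_Ioi]; exact ENNReal.zero_lt_top
        · exact ⟨sub_ne_zero_of_ne (key_pointwise l hl ha hab hs).ne', hs⟩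
      · filter_upwards [ae_restrict_mem measurableSet_Ioi] with s hs
        exact sub_nonneg.mpr (key_pointwise l hl ha hab hs).le
    rw [integral_sub hia hib] at hpos
    linarith
  have eq1 : a ^ l * Real.exp (-a) * upperIncGamma l b
      = (Real.exp (-a) * Real.exp (-b)) *
        ∫ s in Set.Ioi (0:ℝ), a ^ l * ((s + b) ^ (l - 1) * Real.exp (-s)) := by
    rw [uig_eq l b, ← integral_const_mul, ← integral_const_mul]
    refine integral_congr_ae (Filter.Eventually.of_forall fun s => ?_)
    have he : Real.exp (-(s + b)) = Real.exp (-s) * Real.exp (-b) := by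
      rw [← Real.exp_add]; ring_nf
    simp only [he]; ring
  have eq2 : b ^ l * Real.exp (-b) * upperIncGamma l a
      = (Real.exp (-a) * Real.exp (-b)) *
        ∫ s in Set.Ioi (0:ℝ), b ^ l * ((s + a) ^ (l - 1) * Real.exp (-s)) := by
    rw [uig_eq l a, ← integral_const_mul, ← integral_const_mul]
    refine integral_congr_ae (Filter.Eventually.of_forall fun s => ?_)
    have he : Real.exp (-(s + a)) = Real.exp (-s) * Real.exp (-a) := by
      rw [← Real.exp_add]; ring_nf
    simp only [he]; ring
  rw [eq1, eq2]
  exact mul_lt_mul_of_pos_left hkey (by positivity)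

end UIGaux

/-- For the gamma model with rate `α > 0` and shape `λ > 0`, the function
`φ(x) = x·α·(αx)^(λ−1)·e^(−αx) / Γ(λ, αx)` is strictly increasing on `(0,∞)`. -/
theorem gamma_x_mul_hazard_strictMono (α l : ℝ) (hα : 0 < α) (hl : 0 < l) :
    StrictMonoOn
      (fun x : ℝ =>
        x * (α * (α * x) ^ (l - 1) * Real.exp (-(α * x))) / upperIncGamma l (α * x))
      (Set.Ioi (0:ℝ)) := by
  have hrw : ∀ z : ℝ, 0 < z →
      z * (α * (α * z) ^ (l - 1) * Real.exp (-(α * z))) / upperIncGamma l (α * z)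
        = (α * z) ^ l * Real.exp (-(α * z)) / upperIncGamma l (α * z) := by
    intro z hz
    have hw : 0 < α * z := mul_pos hα hz
    have : (α * z) ^ l = (α * z) ^ (l - 1) * (α * z) := by
      rw [← Real.rpow_add_one hw.ne']
      ring_nf
    rw [this]
    ring_nf
  intro x hx y hy hxy
  simp only [Set.mem_Ioi] at hx hy
  simp only []
  rw [hrw x hx, hrw y hy]
  exact UIGaux.core l hl (mul_pos hα hx) (by nlinarith)
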